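/- arXiv:1412.2611 — 5 statements merged into one kernel-verified Lean document; each statement's English description precedes it below -/
import Mathlib

section
/- If v is a positive C^2 solution on [0,L] of -d v'' = f(v) with v(0)=0 and v'(L)=0, where d>0 and f satisfies f(0)=f(1)=0, 0<f(s)<f'(0)s on (0,1), f<0 on (1,∞), then d(f'(0))^{-1}·(π/(2L))^2 < 1, i.e. f'(0)/d > (π/(2L))^2. -/
/-!
Test the equation against `φ(y) = sin (π y / (2L))`, the positive first eigenfunction of
`-φ'' = λ φ` with `φ(0) = 0`, `φ'(L) = 0`, eigenvalue `k² = (π / (2L))²`. Integrating by parts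
twice, the boundary terms vanish and `d k² ∫ v φ = ∫ f(v) φ`. Since `f(s) < f'(0) s` for every
`s > 0` and `v φ > 0` on `(0, L]`, the right side is `< f'(0) ∫ v φ`, whence `d k² < f'(0)`.
-/

open Real Set intervalIntegral

lemma apply_lt_deriv_zero_mul {f : ℝ → ℝ} (hf1 : f 1 = 0)
    (hfpos : ∀ s ∈ Ioo (0:ℝ) 1, 0 < f s ∧ f s < deriv f 0 * s)
    (hfneg : ∀ s, 1 < s → f s < 0) {s : ℝ} (hs : 0 < s) :
    f s < deriv f 0 * s := by
  have hf'0 : 0 < deriv f 0 := by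
    obtain ⟨hpos, hlt⟩ := hfpos (1 / 2) (by norm_num)
    linarith
  rcases lt_trichotomy s 1 with h | rfl | h
  · exact (hfpos s ⟨hs, h⟩).2
  · simpa [hf1] using hf'0
  · exact (hfneg s h).trans (by positivity)

lemma ContDiff.continuous_deriv_deriv {v : ℝ → ℝ} (hv : ContDiff ℝ 2 v) :
    Continuous (deriv (deriv v)) :=
  ((contDiff_succ_iff_deriv (n := 1)).mp hv).2.2.continuous_deriv le_rfl

/-- Lagrange's identity: `u'' φ - u φ''` is the derivative of `u' φ - u φ'`. -/
theorem integral_deriv_deriv_mul_sub_mul_deriv_deriv {u φ : ℝ → ℝ}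
    (hu : ContDiff ℝ 2 u) (hφ : ContDiff ℝ 2 φ) (a b : ℝ) :
    ∫ x in a..b, (deriv (deriv u) x * φ x - u x * deriv (deriv φ) x) =
      (deriv u b * φ b - u b * deriv φ b) - (deriv u a * φ a - u a * deriv φ a) := by
  obtain ⟨hud, -, hu'⟩ := (contDiff_succ_iff_deriv (n := 1)).mp hu
  obtain ⟨hφd, -, hφ'⟩ := (contDiff_succ_iff_deriv (n := 1)).mp hφ
  have hu'd := hu'.differentiable one_ne_zero
  have hφ'd := hφ'.differentiable one_ne_zero
  refine integral_eq_sub_of_hasDerivAt (f := fun x => deriv u x * φ x - u x * deriv φ x)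
    (fun x _ => ?_) ?_
  · exact (((hu'd x).hasDerivAt.mul (hφd x).hasDerivAt).sub
      ((hud x).hasDerivAt.mul (hφ'd x).hasDerivAt)).congr_deriv (by ring)
  · have hu''c := hu.continuous_deriv_deriv
    have hφ''c := hφ.continuous_deriv_deriv
    exact Continuous.intervalIntegrable (by fun_prop) a b

lemma hasDerivAt_sin_const_mul (k y : ℝ) :
    HasDerivAt (fun y => sin (k * y)) (k * cos (k * y)) y := by
  simpa [mul_comm] using ((hasDerivAt_id y).const_mul k).sin

lemma deriv_sin_const_mul (k : ℝ) :
    deriv (fun y => sin (k * y)) = fun y => k * cos (k * y) :=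
  funext fun y => (hasDerivAt_sin_const_mul k y).deriv

lemma deriv_deriv_sin_const_mul (k : ℝ) :
    deriv (deriv fun y => sin (k * y)) = fun y => -k ^ 2 * sin (k * y) := by
  rw [deriv_sin_const_mul]
  funext y
  have hcos := (((hasDerivAt_id y).const_mul k).cos.const_mul k).deriv
  simp only [id, mul_one] at hcos
  rw [hcos]
  ring

lemma sin_pi_div_mul_pos_of_mem_Ioc {L y : ℝ} (hy : y ∈ Ioc 0 L) :
    0 < sin (π / (2 * L) * y) := by
  have hL := hy.1.trans_le hy.2
  refine sin_pos_of_pos_of_lt_pi (by have := hy.1; positivity) ?_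
  calc π / (2 * L) * y ≤ π / (2 * L) * L := by gcongr; exact hy.2
    _ = π / 2 := by field_simp
    _ < π := by linarith [pi_pos]

lemma integral_deriv_deriv_mul_sin_eq {v : ℝ → ℝ} (hv : ContDiff ℝ 2 v) {k L : ℝ}
    (hv0 : v 0 = 0) (hvL : deriv v L = 0) (hcos : cos (k * L) = 0) :
    ∫ y in 0..L, deriv (deriv v) y * sin (k * y) = -k ^ 2 * ∫ y in 0..L, v y * sin (k * y) := by
  have hlagrange := integral_deriv_deriv_mul_sub_mul_deriv_deriv hv
    (φ := fun y => sin (k * y)) (by fun_prop) 0 L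
  rw [deriv_deriv_sin_const_mul, deriv_sin_const_mul] at hlagrange
  simp only [hv0, hvL, hcos, mul_zero, zero_mul, sub_zero, sin_zero] at hlagrange
  have hv''c := hv.continuous_deriv_deriv
  have hvc := hv.continuous
  rw [integral_sub (Continuous.intervalIntegrable (by fun_prop) _ _)
    (Continuous.intervalIntegrable (by fun_prop) _ _)] at hlagrange
  simp only [mul_left_comm (v _), integral_const_mul] at hlagrange
  linarith

theorem stmt_0_general (d L : ℝ) (hd : 0 < d) (hL : 0 < L)
    (f : ℝ → ℝ) (hf : ContDiff ℝ 1 f)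
    (hf1 : f 1 = 0)
    (hfpos : ∀ s ∈ Set.Ioo (0:ℝ) 1, 0 < f s ∧ f s < deriv f 0 * s)
    (hfneg : ∀ s, 1 < s → f s < 0)
    (v : ℝ → ℝ) (hv : ContDiff ℝ 2 v)
    (hvpos : ∀ y ∈ Set.Ioc 0 L, 0 < v y)
    (hode : ∀ y ∈ Set.Ioo 0 L, -d * deriv (deriv v) y = f (v y))
    (hv0 : v 0 = 0) (hvL : deriv v L = 0) :
    deriv f 0 / d > (Real.pi / (2 * L)) ^ 2 := by
  set k := π / (2 * L)
  have hkL : k * L = π / 2 := by simp only [k]; field_simp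
  have hvc := hv.continuous
  have hfc := hf.continuous
  have hvφ : ∀ y ∈ Ioc 0 L, 0 < v y * sin (k * y) := fun y hy =>
    mul_pos (hvpos y hy) (sin_pi_div_mul_pos_of_mem_Ioc hy)
  have hfφ : ∀ y ∈ Ioc 0 L, f (v y) * sin (k * y) < deriv f 0 * (v y * sin (k * y)) :=
    fun y hy => mul_assoc (deriv f 0) _ _ ▸ mul_lt_mul_of_pos_right
      (apply_lt_deriv_zero_mul hf1 hfpos hfneg (hvpos y hy)) (sin_pi_div_mul_pos_of_mem_Ioc hy)
  have hweak : ∫ y in 0..L, f (v y) * sin (k * y) =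
      d * k ^ 2 * ∫ y in 0..L, v y * sin (k * y) := by
    rw [integral_congr_Ioo_of_le (g := fun y => -d * (deriv (deriv v) y * sin (k * y))) hL.le
        (fun y hy => by simp only [← hode y hy, mul_assoc]),
      integral_const_mul, integral_deriv_deriv_mul_sin_eq hv hv0 hvL (by rw [hkL, cos_pi_div_two])]
    ring
  have hpos : 0 < ∫ y in 0..L, v y * sin (k * y) :=
    intervalIntegral_pos_of_pos_on (Continuous.intervalIntegrable (by fun_prop) _ _)
      (fun y hy => hvφ y (Ioo_subset_Ioc_self hy)) hL
  have hlt : ∫ y in 0..L, f (v y) * sin (k * y) < ∫ y in 0..L, deriv f 0 * (v y * sin (k * y)) :=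
    integral_lt_integral_of_continuousOn_of_le_of_exists_lt hL (by fun_prop) (by fun_prop)
      (fun y hy => (hfφ y hy).le) ⟨L, right_mem_Icc.mpr hL.le, hfφ L (right_mem_Ioc.mpr hL)⟩
  rw [integral_const_mul, hweak] at hlt
  have hk2 : d * k ^ 2 < deriv f 0 := lt_of_mul_lt_mul_right hlt hpos.le
  rw [gt_iff_lt, lt_div_iff₀ hd]
  linarith

theorem stmt_0 (d L : ℝ) (hd : 0 < d) (hL : 0 < L)
    (f : ℝ → ℝ) (hf : ContDiff ℝ 1 f)
    (hf0 : f 0 = 0) (hf1 : f 1 = 0)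
    (hfpos : ∀ s ∈ Set.Ioo (0:ℝ) 1, 0 < f s ∧ f s < deriv f 0 * s)
    (hfneg : ∀ s, 1 < s → f s < 0)
    (v : ℝ → ℝ) (hv : ContDiff ℝ 2 v)
    (hvpos : ∀ y ∈ Set.Ioc 0 L, 0 < v y)
    (hode : ∀ y ∈ Set.Ioo 0 L, -d * deriv (deriv v) y = f (v y))
    (hv0 : v 0 = 0) (hvL : deriv v L = 0) :
    deriv f 0 / d > (Real.pi / (2 * L)) ^ 2 :=
  stmt_0_general d L hd hL f hf hf1 hfpos hfneg v hv hvpos hode hv0 hvL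
end

section
/- Any positive bounded solution v of the boundary value problem -d v'' = f(v) on (0,L), v(0)=0, v'(L)=0 satisfies v(y) < 1 for all y ∈ [0,L]. -/
/-!
Let `v` attain its maximum `M` over `[0, L]` at `b`. Then `b > 0`, and `v'(b) = 0`, by the
Neumann condition if `b = L`. With `F` a primitive of `f`, the energy `d/2 v'² + F(v)` is
conserved. If `M > 1`, then at a point `c < b` with `v(c) = 1` the energy is at least
`F(1) > F(M)`, which is the energy at `b`. If `M = 1`, conservation gives
`d/2 v'² = F(1) - F(v) ≤ C/2 (1 - v)²` because `f(1) = 0` and `f'` is bounded, so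
`|(1 - v)'| ≤ K |1 - v|` with `1 - v` vanishing at `b`. By Grönwall, `v ≡ 1` on `[0, b]`,
contradicting `v(0) = 0`.
-/

open Real Set

noncomputable def energy (d : ℝ) (f v : ℝ → ℝ) (y : ℝ) : ℝ :=
  d / 2 * deriv v y ^ 2 + ∫ t in (0 : ℝ)..v y, f t

theorem hasDerivAt_energy {d : ℝ} {f v : ℝ → ℝ} (hf : Continuous f) (hv : ContDiff ℝ 2 v)
    (y : ℝ) :
    HasDerivAt (energy d f v) (deriv v y * (d * deriv (deriv v) y + f (v y))) y := by
  have hv' : HasDerivAt (deriv v) (deriv (deriv v) y) y :=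
    (hv.differentiable_deriv_two y).hasDerivAt
  have hF : HasDerivAt (fun z => ∫ t in (0 : ℝ)..v z, f t) (f (v y) * deriv v y) y :=
    (hf.integral_hasStrictDerivAt 0 (v y)).hasDerivAt.comp y
      (hv.differentiable (by norm_num) y).hasDerivAt
  refine ((hv'.pow 2).const_mul (d / 2)).add hF |>.congr_deriv ?_
  ring

theorem energy_eq_of_ode {d a b : ℝ} {f v : ℝ → ℝ} (hf : Continuous f) (hv : ContDiff ℝ 2 v)
    (hode : ∀ y ∈ Ioo a b, -d * deriv (deriv v) y = f (v y)) :
    ∀ y ∈ Icc a b, energy d f v y = energy d f v b := by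
  intro y hy
  rcases hy.2.eq_or_lt with rfl | hyb
  · rfl
  have hE : ∀ z, HasDerivAt (energy d f v) _ z := hasDerivAt_energy (d := d) hf hv
  obtain ⟨c, hc, hslope⟩ := exists_hasDerivAt_eq_slope (energy d f v) _ hyb
    (fun z _ => (hE z).continuousAt.continuousWithinAt) (fun z _ => hE z)
  have hc0 : d * deriv (deriv v) c + f (v c) = 0 := by
    linarith [hode c ⟨hy.1.trans_lt hc.1, hc.2⟩]
  rw [hc0, mul_zero, eq_comm, div_eq_zero_iff, sub_eq_zero] at hslope
  exact hslope.resolve_right (sub_ne_zero.2 hyb.ne') |>.symm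

theorem integral_lt_integral_of_neg_on {f : ℝ → ℝ} {a b : ℝ} (hf : Continuous f) (hab : a < b)
    (hneg : ∀ s ∈ Ioo a b, f s < 0) :
    ∫ t in (0 : ℝ)..b, f t < ∫ t in (0 : ℝ)..a, f t := by
  have hpos : 0 < ∫ t in a..b, -f t :=
    intervalIntegral.intervalIntegral_pos_of_pos_on (hf.neg.intervalIntegrable _ _)
      (fun s hs => neg_pos.2 (hneg s hs)) hab
  rw [intervalIntegral.integral_neg, neg_pos,
    ← intervalIntegral.integral_interval_sub_left (hf.intervalIntegrable 0 b)
      (hf.intervalIntegrable 0 a)] at hpos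
  linarith

theorem integral_le_half_mul_sq_of_abs_deriv_le {f : ℝ → ℝ} {s r C : ℝ} (hf : Differentiable ℝ f)
    (hsr : s ≤ r) (hr : f r = 0) (hC : ∀ t ∈ Icc s r, |deriv f t| ≤ C) :
    ∫ t in s..r, f t ≤ C / 2 * (r - s) ^ 2 := by
  have hlin : ∀ t ∈ Icc s r, f t ≤ C * (r - t) := by
    intro t ht
    have h := (convex_Icc s r).norm_image_sub_le_of_norm_deriv_le (fun x _ => hf x) hC
      ht (right_mem_Icc.2 hsr)
    rw [hr, zero_sub, norm_neg, Real.norm_eq_abs, Real.norm_eq_abs,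
      abs_of_nonneg (sub_nonneg.2 ht.2)] at h
    exact (le_abs_self _).trans h
  calc ∫ t in s..r, f t ≤ ∫ t in s..r, C * (r - t) :=
        intervalIntegral.integral_mono_on hsr (hf.continuous.intervalIntegrable _ _)
          ((by fun_prop : Continuous fun t => C * (r - t)).intervalIntegrable _ _) hlin
    _ = C / 2 * (r - s) ^ 2 := by
        simp [intervalIntegral.integral_comp_sub_left (fun x => x)]
        ring

theorem abs_le_sqrt_mul_abs_of_half_mul_sq_le {d C a b : ℝ} (hd : 0 < d)
    (h : d / 2 * a ^ 2 ≤ C / 2 * b ^ 2) : |a| ≤ √(C / d) * |b| := by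
  rw [← sqrt_sq_eq_abs b, ← sqrt_mul' _ (sq_nonneg b)]
  apply abs_le_sqrt
  rw [div_mul_eq_mul_div, le_div_iff₀ hd]
  linarith

theorem eq_zero_of_abs_deriv_le_mul_abs_self_of_eq_zero_at_end {w w' : ℝ → ℝ} {K a b : ℝ}
    (hw : ∀ x ∈ Icc a b, HasDerivAt w (w' x) x) (hb : w b = 0)
    (bound : ∀ x ∈ Ioc a b, |w' x| ≤ K * |w x|) :
    ∀ x ∈ Icc a b, w x = 0 := by
  intro x hx
  have hrefl : ∀ t ∈ Icc 0 (b - a), HasDerivAt (fun t => w (b - t)) (-w' (b - t)) t := by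
    intro t ht
    have hmem : b - t ∈ Icc a b := ⟨by linarith [ht.2], by linarith [ht.1]⟩
    exact (hw _ hmem).comp_const_sub b t
  have h := eq_zero_of_abs_deriv_le_mul_abs_self_of_eq_zero_right (K := K)
    (fun t ht => (hrefl t ht).continuousAt.continuousWithinAt)
    (fun t ht => (hrefl t (Ico_subset_Icc_self ht)).hasDerivWithinAt) (by simpa using hb)
    (fun t ht => by simpa using bound (b - t) ⟨by linarith [ht.2], by linarith [ht.1]⟩)
    (b - x) ⟨by linarith [hx.2], by linarith [hx.1]⟩
  simpa using h

theorem le_one_of_energy_eq {d a b : ℝ} {f v : ℝ → ℝ} (hd : 0 ≤ d) (hf : Continuous f)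
    (hfneg : ∀ s, 1 < s → f s < 0) (hab : a ≤ b) (hv : ContinuousOn v (Icc a b))
    (hva : v a ≤ 1) (hE : ∀ y ∈ Icc a b, energy d f v y = energy d f v b)
    (hcrit : deriv v b = 0) : v b ≤ 1 := by
  by_contra! hvb
  obtain ⟨c, hc, hvc⟩ := intermediate_value_Icc hab hv ⟨hva, hvb.le⟩
  have hlt : ∫ t in (0 : ℝ)..v b, f t < ∫ t in (0 : ℝ)..1, f t :=
    integral_lt_integral_of_neg_on hf hvb fun s hs => hfneg s hs.1
  have hEc := hE c hc
  simp only [energy, hcrit, hvc] at hEc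
  nlinarith [sq_nonneg (deriv v c)]

theorem eqOn_one_of_energy_eq {d a b : ℝ} {f v : ℝ → ℝ} (hd : 0 < d) (hf : ContDiff ℝ 1 f)
    (hf1 : f 1 = 0) (hv : Differentiable ℝ v) (hrange : ∀ y ∈ Icc a b, v y ∈ Icc 0 1)
    (hE : ∀ y ∈ Icc a b, energy d f v y = energy d f v b) (hvb : v b = 1)
    (hcrit : deriv v b = 0) : ∀ y ∈ Icc a b, v y = 1 := by
  obtain ⟨C, hC⟩ : ∃ C, ∀ s ∈ Icc (0 : ℝ) 1, ‖deriv f s‖ ≤ C :=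
    isCompact_Icc.exists_bound_of_continuousOn hf.continuous_deriv_one.continuousOn
  have hbound : ∀ y ∈ Ioc a b, |-deriv v y| ≤ √(C / d) * |1 - v y| := by
    intro y hy
    have hy' : y ∈ Icc a b := Ioc_subset_Icc_self hy
    have hEy := hE y hy'
    simp only [energy, hcrit, hvb] at hEy
    have hquad := integral_le_half_mul_sq_of_abs_deriv_le (hf.differentiable one_ne_zero)
      (hrange y hy').2 hf1 fun s hs => hC s ⟨(hrange y hy').1.trans hs.1, hs.2⟩
    rw [← intervalIntegral.integral_interval_sub_left (hf.continuous.intervalIntegrable 0 1)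
      (hf.continuous.intervalIntegrable 0 (v y))] at hquad
    rw [abs_neg]
    exact abs_le_sqrt_mul_abs_of_half_mul_sq_le hd (by linarith)
  intro y hy
  have h := eq_zero_of_abs_deriv_le_mul_abs_self_of_eq_zero_at_end (w := fun y => 1 - v y)
    (fun x _ => (hv x).hasDerivAt.const_sub 1) (by simp [hvb]) hbound y hy
  linarith

theorem stmt_1_general (d L : ℝ) (hd : 0 < d)
    (f : ℝ → ℝ) (hf : ContDiff ℝ 1 f)
    (hf1 : f 1 = 0)
    (hfneg : ∀ s, 1 < s → f s < 0)
    (v : ℝ → ℝ) (hv : ContDiff ℝ 2 v)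
    (hvpos : ∀ y ∈ Set.Ioc 0 L, 0 < v y)
    (hode : ∀ y ∈ Set.Ioo 0 L, -d * deriv (deriv v) y = f (v y))
    (hv0 : v 0 = 0) (hvL : deriv v L = 0) :
    ∀ y ∈ Set.Icc 0 L, v y < 1 := by
  intro y hy
  by_contra! hy1
  obtain ⟨b, hb, hmax⟩ := isCompact_Icc.exists_isMaxOn ⟨y, hy⟩ hv.continuous.continuousOn
  have hvyb : v y ≤ v b := hmax hy
  have hb0 : 0 < b := hb.1.lt_of_ne <| by rintro rfl; linarith
  have hcrit : deriv v b = 0 := by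
    rcases hb.2.eq_or_lt with rfl | hbL
    · exact hvL
    · exact (hmax.isLocalMax (Icc_mem_nhds hb0 hbL)).deriv_eq_zero
  have hE : ∀ z ∈ Icc 0 b, energy d f v z = energy d f v b :=
    energy_eq_of_ode hf.continuous hv fun z hz => hode z ⟨hz.1, hz.2.trans_le hb.2⟩
  have hvb : v b = 1 := le_antisymm
    (le_one_of_energy_eq hd.le hf.continuous hfneg hb0.le hv.continuous.continuousOn
      (by simp [hv0]) hE hcrit)
    (hy1.trans hvyb)
  have hrange : ∀ z ∈ Icc 0 b, v z ∈ Icc 0 1 := by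
    intro z hz
    refine ⟨?_, hvb ▸ hmax ⟨hz.1, hz.2.trans hb.2⟩⟩
    rcases hz.1.eq_or_lt with rfl | hz0
    · exact hv0.ge
    · exact (hvpos z ⟨hz0, hz.2.trans hb.2⟩).le
  have h0 := eqOn_one_of_energy_eq hd hf hf1 (hv.differentiable (by norm_num)) hrange hE hvb
    hcrit 0 (left_mem_Icc.2 hb0.le)
  simp [hv0] at h0

theorem stmt_1 (d L : ℝ) (hd : 0 < d) (hL : 0 < L)
    (f : ℝ → ℝ) (hf : ContDiff ℝ 1 f)
    (hf0 : f 0 = 0) (hf1 : f 1 = 0)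
    (hfpos : ∀ s ∈ Set.Ioo (0:ℝ) 1, 0 < f s ∧ f s < deriv f 0 * s)
    (hfneg : ∀ s, 1 < s → f s < 0)
    (v : ℝ → ℝ) (hv : ContDiff ℝ 2 v)
    (hvbdd : BddAbove (Set.range v))
    (hvpos : ∀ y ∈ Set.Ioc 0 L, 0 < v y)
    (hode : ∀ y ∈ Set.Ioo 0 L, -d * deriv (deriv v) y = f (v y))
    (hv0 : v 0 = 0) (hvL : deriv v L = 0) :
    ∀ y ∈ Set.Icc 0 L, v y < 1 :=
  stmt_1_general d L hd f hf hf1 hfneg v hv hvpos hode hv0 hvL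
end

section
/- Define M(ρ) = ∫_0^1 dξ / sqrt( (2/d) ∫_ξ^1 (f(ρη)/(ρη))·η dη ) for ρ ∈ (0,1). If f'(0)/d > (π/(2L))^2, then lim_{ρ→0^+} M(ρ) = sqrt(d/f'(0))·(π/2) < L. -/
open Real Set Filter intervalIntegral MeasureTheory Topology

/-!
Since `f s / s → f'(0)` as `s → 0⁺` and `f s / s < f'(0)` on `(0, 1)`, for any `a < f'(0)` and all
small `ρ` the factor `f(ρη)/(ρη)` lies in `[a, f'(0)]` for `η ∈ (0, 1)`. The inner integral is then
squeezed between `a (1 - ξ²)/2` and `f'(0) (1 - ξ²)/2`, so `M(ρ)` lies between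
`√(d/f'(0)) ∫₀¹ dξ/√(1 - ξ²) = √(d/f'(0)) π/2` and `√(d/a) π/2`; letting `a → f'(0)` gives the limit.
The inequality is `π/(2L) < √(f'(0)/d)` inverted.
-/

lemma intervalIntegrable_one_div_sqrt_one_sub_sq :
    IntervalIntegrable (fun x : ℝ => 1 / √(1 - x ^ 2)) volume 0 1 := by
  simpa only [one_div, sqrt_inv] using
    Polynomial.Chebyshev.intervalIntegrable_sqrt_one_sub_sq_inv.mono_set
      (show uIcc (0:ℝ) 1 ⊆ uIcc (-1) 1 from uIcc_subset_uIcc (by simp) (by simp))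

lemma integral_one_div_sqrt_one_sub_sq : ∫ x in (0:ℝ)..1, 1 / √(1 - x ^ 2) = π / 2 := by
  rw [integral_eq_sub_of_hasDerivAt_of_le zero_le_one continuous_arcsin.continuousOn
    (fun x hx => hasDerivAt_arcsin (by linarith [hx.1]) hx.2.ne)
    intervalIntegrable_one_div_sqrt_one_sub_sq, arcsin_one, arcsin_zero, sub_zero]

lemma sqrt_div_mul_one_div_sqrt {a d : ℝ} (ha : 0 ≤ a) (hd : 0 ≤ d) (P : ℝ) :
    √(d / a) * (1 / √P) = 1 / √((2 / d) * (a * (P / 2))) := by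
  rw [show (2 / d) * (a * (P / 2)) = (a / d) * P by ring, sqrt_mul (by positivity),
    ← one_div_mul_one_div, one_div √(a / d), ← sqrt_inv, inv_div]

lemma one_div_sqrt_integral_mem_Icc {d a b ξ : ℝ} {h : ℝ → ℝ} (hd : 0 < d) (ha : 0 < a)
    (hξ : ξ ∈ Ioo (-1) 1) (hh : IntervalIntegrable h volume ξ 1)
    (hab : ∀ η ∈ Ioo ξ 1, a * η ≤ h η ∧ h η ≤ b * η) :
    1 / √((2 / d) * ∫ η in ξ..1, h η) ∈
      Icc (√(d / b) * (1 / √(1 - ξ ^ 2))) (√(d / a) * (1 / √(1 - ξ ^ 2))) := by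
  have hP : 0 < (1 - ξ ^ 2) / 2 := by nlinarith [hξ.1, hξ.2]
  have hb : 0 < b := by
    have hm : 0 < (ξ + 1) / 2 := by linarith [hξ.1]
    obtain ⟨hm₁, hm₂⟩ := hab ((ξ + 1) / 2) ⟨by linarith [hξ.2], by linarith [hξ.2]⟩
    exact pos_of_mul_pos_left ((mul_pos ha hm).trans_le (hm₁.trans hm₂)) hm.le
  have integral_mul_id (c : ℝ) : ∫ η in ξ..1, c * η = c * ((1 - ξ ^ 2) / 2) := by
    rw [intervalIntegral.integral_const_mul, integral_id]; ring
  have hlow : a * ((1 - ξ ^ 2) / 2) ≤ ∫ η in ξ..1, h η := by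
    rw [← integral_mul_id]
    exact integral_mono_on_of_le_Ioo hξ.2.le ((continuous_const_mul a).intervalIntegrable _ _) hh
      fun η hη => (hab η hη).1
  have hup : ∫ η in ξ..1, h η ≤ b * ((1 - ξ ^ 2) / 2) := by
    rw [← integral_mul_id]
    exact integral_mono_on_of_le_Ioo hξ.2.le hh ((continuous_const_mul b).intervalIntegrable _ _)
      fun η hη => (hab η hη).2
  have h2d : 0 < 2 / d := by positivity
  rw [sqrt_div_mul_one_div_sqrt ha.le hd.le, sqrt_div_mul_one_div_sqrt hb.le hd.le]
  constructor
  · exact one_div_le_one_div_of_le (sqrt_pos.2 (mul_pos h2d ((mul_pos ha hP).trans_le hlow)))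
      (sqrt_le_sqrt (by gcongr))
  · exact one_div_le_one_div_of_le (sqrt_pos.2 (mul_pos h2d (mul_pos ha hP)))
      (sqrt_le_sqrt (by gcongr))

lemma integral_one_div_sqrt_integral_mem_Icc {d a b : ℝ} {h : ℝ → ℝ} (hd : 0 < d) (ha : 0 < a)
    (hh : IntervalIntegrable h volume 0 1) (hab : ∀ η ∈ Ioo 0 1, a * η ≤ h η ∧ h η ≤ b * η) :
    ∫ ξ in (0:ℝ)..1, 1 / √((2 / d) * ∫ η in ξ..1, h η) ∈
      Icc (√(d / b) * (π / 2)) (√(d / a) * (π / 2)) := by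
  set g : ℝ → ℝ := fun ξ => 1 / √((2 / d) * ∫ η in ξ..1, h η)
  have hg : ∀ ξ ∈ Ioo (0:ℝ) 1,
      g ξ ∈ Icc (√(d / b) * (1 / √(1 - ξ ^ 2))) (√(d / a) * (1 / √(1 - ξ ^ 2))) :=
    fun ξ hξ => one_div_sqrt_integral_mem_Icc hd ha ⟨by linarith [hξ.1], hξ.2⟩
      (hh.mono_set (uIcc_subset_uIcc (by simp [hξ.1.le, hξ.2.le]) (by simp)))
      fun η hη => hab η ⟨hξ.1.trans hη.1, hη.2⟩
  have hmeas : AEStronglyMeasurable g (volume.restrict (uIoc 0 1)) := by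
    have hprim : AEMeasurable (fun ξ => ∫ η in ξ..1, h η) (volume.restrict (uIoc 0 1)) :=
      ((continuousOn_primitive_interval_left
        ((intervalIntegrable_iff' (f := h) (μ := volume)).1 hh)).aemeasurable measurableSet_uIcc).mono_measure
        (Measure.restrict_mono uIoc_subset_uIcc le_rfl)
    exact (by fun_prop : Measurable fun y : ℝ => 1 / √((2 / d) * y)).comp_aemeasurable
      hprim |>.aestronglyMeasurable
  have hlow := intervalIntegrable_one_div_sqrt_one_sub_sq.const_mul (√(d / b))
  have hup := intervalIntegrable_one_div_sqrt_one_sub_sq.const_mul (√(d / a))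
  have hgint : IntervalIntegrable g volume 0 1 := by
    refine hup.mono_fun' hmeas ?_
    rw [uIoc_of_le zero_le_one, ← Measure.restrict_congr_set Ioo_ae_eq_Ioc]
    filter_upwards [ae_restrict_mem measurableSet_Ioo] with ξ hξ
    rw [norm_of_nonneg (by positivity)]
    exact (hg ξ hξ).2
  rw [← integral_one_div_sqrt_one_sub_sq, ← intervalIntegral.integral_const_mul,
    ← intervalIntegral.integral_const_mul]
  exact ⟨integral_mono_on_of_le_Ioo zero_le_one hlow hgint fun ξ hξ => (hg ξ hξ).1,
    integral_mono_on_of_le_Ioo zero_le_one hgint hup fun ξ hξ => (hg ξ hξ).2⟩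

lemma eventually_forall_Ioo_of_eventually_nhdsGT {α : Type*} [LinearOrder α] [TopologicalSpace α]
    [OrderTopology α] [NoMaxOrder α] {a : α} {p : α → Prop} (hp : ∀ᶠ s in 𝓝[>] a, p s) :
    ∀ᶠ ρ in 𝓝[>] a, ∀ s ∈ Ioo a ρ, p s := by
  obtain ⟨δ, hδ, hsub⟩ := mem_nhdsGT_iff_exists_Ioo_subset.1 hp
  filter_upwards [Ioo_mem_nhdsGT hδ] with ρ hρ s hs using hsub ⟨hs.1, hs.2.trans hρ.2⟩

noncomputable def halfPeriod (d : ℝ) (f : ℝ → ℝ) (ρ : ℝ) : ℝ :=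
  ∫ ξ in (0:ℝ)..1, 1 / √((2 / d) * ∫ η in ξ..1, f (ρ * η) / (ρ * η) * η)

lemma halfPeriod_mem_Icc {d a b ρ : ℝ} {f : ℝ → ℝ} (hd : 0 < d) (hf : Continuous f)
    (hf0 : f 0 = 0) (hρ : 0 < ρ) (ha : 0 < a) (hab : ∀ s ∈ Ioo 0 ρ, a ≤ f s / s ∧ f s / s ≤ b) :
    halfPeriod d f ρ ∈ Icc (√(d / b) * (π / 2)) (√(d / a) * (π / 2)) := by
  have hh : (fun η => f (ρ * η) / (ρ * η) * η) = fun η => f (ρ * η) / ρ := by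
    funext η
    rcases eq_or_ne η 0 with rfl | hη
    · simp [hf0]
    · field_simp
  refine integral_one_div_sqrt_integral_mem_Icc hd ha ?_ fun η hη => ?_
  · rw [hh]
    exact (by fun_prop : Continuous fun η => f (ρ * η) / ρ).intervalIntegrable _ _
  · obtain ⟨hlow, hup⟩ := hab (ρ * η) ⟨mul_pos hρ hη.1, mul_lt_of_lt_one_right hρ hη.2⟩
    exact ⟨mul_le_mul_of_nonneg_right hlow hη.1.le, mul_le_mul_of_nonneg_right hup hη.1.le⟩

lemma tendsto_halfPeriod {d c : ℝ} {f : ℝ → ℝ} (hd : 0 < d) (hf : Continuous f) (hf0 : f 0 = 0)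
    (hc : 0 < c) (hslope : Tendsto (fun s => f s / s) (𝓝[>] 0) (𝓝 c))
    (hup : ∀ s ∈ Ioo 0 1, f s / s ≤ c) :
    Tendsto (halfPeriod d f) (𝓝[>] 0) (𝓝 (√(d / c) * (π / 2))) := by
  have hbounds : ∀ a ∈ Ioo 0 c, ∀ᶠ ρ in 𝓝[>] 0,
      halfPeriod d f ρ ∈ Icc (√(d / c) * (π / 2)) (√(d / a) * (π / 2)) := by
    intro a ha
    filter_upwards [eventually_forall_Ioo_of_eventually_nhdsGT
      (hslope.eventually (lt_mem_nhds ha.2)), Ioo_mem_nhdsGT one_pos] with ρ hlow hρ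
    exact halfPeriod_mem_Icc hd hf hf0 hρ.1 ha.1
      fun s hs => ⟨(hlow s hs).le, hup s ⟨hs.1, hs.2.trans hρ.2⟩⟩
  refine tendsto_order.2 ⟨fun x hx => ?_, fun x hx => ?_⟩
  · exact (hbounds (c / 2) ⟨half_pos hc, half_lt_self hc⟩).mono fun ρ hρ => hx.trans_le hρ.1
  · have hcont : ContinuousAt (fun t => √(d / t) * (π / 2)) c := by
      fun_prop (disch := exact hc.ne')
    obtain ⟨a, hax, ha⟩ := (((hcont.eventually (gt_mem_nhds hx)).filter_mono
      nhdsWithin_le_nhds).and (Ioo_mem_nhdsLT hc)).exists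
    exact (hbounds a ha).mono fun ρ hρ => hρ.2.trans_lt hax

lemma sqrt_div_mul_pi_div_two_lt {d c L : ℝ} (hL : 0 < L) (h : c / d > (π / (2 * L)) ^ 2) :
    √(d / c) * (π / 2) < L := by
  have hlt : π / (2 * L) < √(c / d) := (lt_sqrt (by positivity)).2 h
  rw [show √(d / c) = (√(c / d))⁻¹ by rw [← sqrt_inv, inv_div], inv_mul_eq_div,
    div_lt_iff₀ ((by positivity : (0:ℝ) < π / (2 * L)).trans hlt)]
  calc π / 2 = L * (π / (2 * L)) := by field_simp
    _ < L * √(c / d) := by gcongr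

theorem stmt_4 (d L : ℝ) (hd : 0 < d) (hL : 0 < L)
    (f : ℝ → ℝ) (hf : ContDiff ℝ 1 f) (hf0 : f 0 = 0)
    (hfpos : ∀ s ∈ Set.Ioo (0:ℝ) 1, 0 < f s ∧ f s < deriv f 0 * s)
    (M : ℝ → ℝ)
    (hM : ∀ ρ ∈ Set.Ioo (0:ℝ) 1,
      M ρ = ∫ ξ in (0:ℝ)..1, 1 / Real.sqrt ((2 / d) * ∫ η in ξ..1, (f (ρ * η) / (ρ * η)) * η))
    (hcond : deriv f 0 / d > (Real.pi / (2 * L)) ^ 2) :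
    Tendsto M (nhdsWithin 0 (Set.Ioi 0))
      (nhds (Real.sqrt (d / deriv f 0) * (Real.pi / 2))) ∧
    Real.sqrt (d / deriv f 0) * (Real.pi / 2) < L := by
  set c := deriv f 0
  have hc : 0 < c := by
    obtain ⟨hpos, hlt⟩ := hfpos (1 / 2) (by norm_num)
    linarith
  have hslope : Tendsto (fun s => f s / s) (𝓝[>] 0) (𝓝 c) := by
    simpa [hf0, div_eq_inv_mul] using
      ((hf.differentiable one_ne_zero) 0).hasDerivAt.tendsto_slope_zero_right
  have hup : ∀ s ∈ Ioo (0:ℝ) 1, f s / s ≤ c :=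
    fun s hs => (div_le_iff₀ hs.1).2 (hfpos s hs).2.le
  have hM' : halfPeriod d f =ᶠ[𝓝[>] 0] M :=
    eventually_of_mem (Ioo_mem_nhdsGT one_pos) fun ρ hρ => (hM ρ hρ).symm
  exact ⟨(tendsto_halfPeriod hd hf.continuous hf0 hc hslope hup).congr' hM',
    sqrt_div_mul_pi_div_two_lt hL hcond⟩
end

section
/- Let f(s) = s(-6s^3 + 9s^2 - 4s + 1). Then f satisfies the Fisher-KPP conditions f(0)=f(1)=0, 0 < f(s) < f'(0)·s on (0,1), and f(s) < 0 for s > 1, but s ↦ f(s)/s is not nonincreasing on (0,1). -/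
/-! Factor `f s = s (1 - s) (6 s² - 3 s + 1)`; the quadratic factor has negative discriminant, which
gives the sign conditions, and `f s - s = -s² (6 s² - 9 s + 4)` with again a negative discriminant.
Finally `f s / s = (1 - s)(6 s² - 3 s + 1)` takes the values `15/32` at `1/4` and `1/2` at `1/2`. -/

open Set

theorem hasDerivAt_id_mul_at_zero {g : ℝ → ℝ} (hg : DifferentiableAt ℝ g 0) :
    HasDerivAt (fun s => s * g s) (g 0) 0 := by
  simpa using (hasDerivAt_id' 0).fun_mul hg.hasDerivAt

namespace FisherKPPExample

def kpp (s : ℝ) : ℝ := s * (-6 * s ^ 3 + 9 * s ^ 2 - 4 * s + 1)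

variable {s : ℝ}

theorem kpp_eq_factor (s : ℝ) : kpp s = s * (1 - s) * (6 * s ^ 2 - 3 * s + 1) := by
  unfold kpp; ring

theorem quadratic_factor_pos (s : ℝ) : 0 < 6 * s ^ 2 - 3 * s + 1 := by
  nlinarith [sq_nonneg (4 * s - 1)]

theorem kpp_pos_of_mem_Ioo (hs : s ∈ Ioo (0 : ℝ) 1) : 0 < kpp s := by
  rw [kpp_eq_factor]
  exact mul_pos (mul_pos hs.1 (sub_pos.2 hs.2)) (quadratic_factor_pos s)

theorem kpp_neg_of_one_lt (hs : 1 < s) : kpp s < 0 := by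
  rw [kpp_eq_factor]
  exact mul_neg_of_neg_of_pos (mul_neg_of_pos_of_neg (by linarith) (by linarith))
    (quadratic_factor_pos s)

theorem kpp_lt_self (hs : s ≠ 0) : kpp s < s := by
  have hq : 0 < 6 * s ^ 2 - 9 * s + 4 := by nlinarith [sq_nonneg (4 * s - 3)]
  have : kpp s - s = -(s ^ 2 * (6 * s ^ 2 - 9 * s + 4)) := by unfold kpp; ring
  linarith [mul_pos (sq_pos_of_ne_zero hs) hq]

theorem hasDerivAt_kpp_zero : HasDerivAt kpp 1 0 := by
  refine (hasDerivAt_id_mul_at_zero (g := fun s : ℝ => -6 * s ^ 3 + 9 * s ^ 2 - 4 * s + 1)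
    (by fun_prop)).congr_deriv ?_
  norm_num

theorem kpp_div_self_quarter_lt_half : kpp (1 / 4) / (1 / 4) < kpp (1 / 2) / (1 / 2) := by
  norm_num [kpp]

end FisherKPPExample

open FisherKPPExample in
theorem stmt_6 (f : ℝ → ℝ)
    (hf : ∀ s, f s = s * (-6 * s ^ 3 + 9 * s ^ 2 - 4 * s + 1)) :
    f 0 = 0 ∧ f 1 = 0 ∧
    (∀ s ∈ Set.Ioo (0:ℝ) 1, 0 < f s ∧ f s < deriv f 0 * s) ∧
    (∀ s, 1 < s → f s < 0) ∧
    ¬ (∀ s t : ℝ, s ∈ Set.Ioo (0:ℝ) 1 → t ∈ Set.Ioo (0:ℝ) 1 → s ≤ t → f t / t ≤ f s / s) := by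
  obtain rfl : f = kpp := funext hf
  rw [hasDerivAt_kpp_zero.deriv]
  refine ⟨by simp [kpp], by norm_num [kpp], fun s hs => ?_, fun s => kpp_neg_of_one_lt, ?_⟩
  · simpa using ⟨kpp_pos_of_mem_Ioo hs, kpp_lt_self hs.1.ne'⟩
  · intro hmono
    have := hmono (1 / 4) (1 / 2) ⟨by norm_num, by norm_num⟩ ⟨by norm_num, by norm_num⟩
      (by norm_num)
    exact this.not_gt kpp_div_self_quarter_lt_half
end

section
/- Let d, ν, L, μ, a > 0, c > 0, β̄ the first positive zero of dβ cos(βL)+ν sin(βL), and define α₀⁻(c,β) = -μ d β cos(βL) / (c(dβ cos(βL) + ν sin(βL))) for β ∈ [π/(2L), β̄). Then α₀⁻(c, π/(2L)) = 0, α₀⁻(c,β) > 0 for β ∈ (π/(2L), β̄), α₀⁻(c,β) → +∞ as β → β̄⁻, and for fixed β ∈ (π/(2L), β̄) the map c ↦ α₀⁻(c,β) is strictly decreasing with limits +∞ as c → 0⁺ and 0 as c → +∞. -/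
open Real Set Filter

theorem stmt_18 (d ν L μ : ℝ) (hd : 0 < d) (hν : 0 < ν) (hL : 0 < L) (hμ : 0 < μ)
    (βb : ℝ)
    (hβb : IsLeast {β : ℝ | 0 < β ∧ d * β * Real.cos (β * L) + ν * Real.sin (β * L) = 0} βb)
    (hβb' : βb ∈ Set.Ioo (Real.pi / (2 * L)) (Real.pi / L))
    (A : ℝ → ℝ → ℝ)
    (hA : ∀ c β, A c β = -μ * d * β * Real.cos (β * L) /
      (c * (d * β * Real.cos (β * L) + ν * Real.sin (β * L)))) :
    (∀ c, 0 < c → A c (Real.pi / (2 * L)) = 0) ∧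
    (∀ c, 0 < c → ∀ β ∈ Set.Ioo (Real.pi / (2 * L)) βb, 0 < A c β) ∧
    (∀ c, 0 < c → Tendsto (A c) (nhdsWithin βb (Set.Iio βb)) atTop) ∧
    (∀ β ∈ Set.Ioo (Real.pi / (2 * L)) βb,
      StrictAntiOn (fun c => A c β) (Set.Ioi 0) ∧
      Tendsto (fun c => A c β) (nhdsWithin 0 (Set.Ioi 0)) atTop ∧
      Tendsto (fun c => A c β) atTop (nhds 0)) := by
  obtain ⟨⟨hβbpos, hβbzero⟩, hβbleast⟩ := hβb
  obtain ⟨h1, h2⟩ := hβb'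
  have hLne : L ≠ 0 := hL.ne'
  have hhalf : Real.pi / (2 * L) * L = Real.pi / 2 := by field_simp
  have hhalfpos : 0 < Real.pi / (2 * L) := by positivity
  have hgcont : Continuous (fun β : ℝ => d * β * Real.cos (β * L) + ν * Real.sin (β * L)) := by
    fun_prop
  have hgmid : d * (Real.pi / (2 * L)) * Real.cos (Real.pi / (2 * L) * L)
      + ν * Real.sin (Real.pi / (2 * L) * L) = ν := by
    rw [hhalf]; simp
  -- g positive on (0, βb)
  have hgpos : ∀ β ∈ Set.Ioo (0:ℝ) βb,
      0 < d * β * Real.cos (β * L) + ν * Real.sin (β * L) := by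
    intro β hβ
    by_contra hle
    push_neg at hle
    have hne : d * β * Real.cos (β * L) + ν * Real.sin (β * L) ≠ 0 := by
      intro h0
      exact absurd (hβbleast ⟨hβ.1, h0⟩) (not_le.mpr hβ.2)
    have hlt : d * β * Real.cos (β * L) + ν * Real.sin (β * L) < 0 :=
      lt_of_le_of_ne hle hne
    have hmem : (0:ℝ) ∈ Set.uIcc
        (d * β * Real.cos (β * L) + ν * Real.sin (β * L))
        (d * (Real.pi / (2 * L)) * Real.cos (Real.pi / (2 * L) * L)
          + ν * Real.sin (Real.pi / (2 * L) * L)) := by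
      rw [hgmid]
      exact Set.mem_uIcc.mpr (Or.inl ⟨hlt.le, hν.le⟩)
    obtain ⟨x, hx, hx0⟩ := intermediate_value_uIcc
      (hgcont.continuousOn (s := Set.uIcc β (Real.pi / (2 * L)))) hmem
    have hxpos : 0 < x := by
      rcases Set.mem_uIcc.mp hx with ⟨ha, _⟩ | ⟨ha, _⟩
      · exact lt_of_lt_of_le hβ.1 ha
      · exact lt_of_lt_of_le hhalfpos ha
    have hxlt : x < βb := by
      rcases Set.mem_uIcc.mp hx with ⟨_, hb⟩ | ⟨_, hb⟩
      · exact lt_of_le_of_lt hb h1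
      · exact lt_of_le_of_lt hb hβ.2
    exact absurd (hβbleast ⟨hxpos, hx0⟩) (not_le.mpr hxlt)
  -- cos negative on (π/(2L), βb]
  have hcosneg : ∀ β, Real.pi / (2 * L) < β → β ≤ βb → Real.cos (β * L) < 0 := by
    intro β hb1 hb2
    apply Real.cos_neg_of_pi_div_two_lt_of_lt
    · calc Real.pi / 2 = Real.pi / (2 * L) * L := hhalf.symm
        _ < β * L := by exact mul_lt_mul_of_pos_right hb1 hL
    · have : β * L < Real.pi := by
        calc β * L ≤ βb * L := mul_le_mul_of_nonneg_right hb2 hL.le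
          _ < Real.pi / L * L := mul_lt_mul_of_pos_right h2 hL
          _ = Real.pi := by field_simp
      linarith [Real.pi_pos]
  refine ⟨?_, ?_, ?_, ?_⟩
  · intro c hc
    rw [hA]
    rw [hhalf, Real.cos_pi_div_two]
    simp
  · intro c hc β hβ
    have hβpos : 0 < β := lt_trans hhalfpos hβ.1
    have hcos := hcosneg β hβ.1 hβ.2.le
    have hnum : 0 < -μ * d * β * Real.cos (β * L) := by nlinarith [mul_pos (mul_pos (mul_pos hμ hd) hβpos) (neg_pos.mpr hcos)]
    have hden : 0 < c * (d * β * Real.cos (β * L) + ν * Real.sin (β * L)) :=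
      mul_pos hc (hgpos β ⟨hβpos, hβ.2⟩)
    rw [hA]
    exact div_pos hnum hden
  · intro c hc
    have hAc : A c = fun β => (-μ * d * β * Real.cos (β * L)) *
        (c * (d * β * Real.cos (β * L) + ν * Real.sin (β * L)))⁻¹ := by
      funext β; rw [hA, div_eq_mul_inv]
    rw [hAc]
    have hcosb := hcosneg βb h1 le_rfl
    have hNpos : 0 < -μ * d * βb * Real.cos (βb * L) := by nlinarith [mul_pos (mul_pos (mul_pos hμ hd) hβbpos) (neg_pos.mpr hcosb)]
    have hNtend : Tendsto (fun β => -μ * d * β * Real.cos (β * L))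
        (nhdsWithin βb (Set.Iio βb)) (nhds (-μ * d * βb * Real.cos (βb * L))) := by
      exact ((by fun_prop : Continuous (fun β : ℝ => -μ * d * β * Real.cos (β * L))).tendsto
        βb).mono_left nhdsWithin_le_nhds
    refine Filter.Tendsto.pos_mul_atTop hNpos hNtend ?_
    have hden : Tendsto (fun β => c * (d * β * Real.cos (β * L) + ν * Real.sin (β * L)))
        (nhdsWithin βb (Set.Iio βb)) (nhdsWithin 0 (Set.Ioi 0)) := by
      rw [tendsto_nhdsWithin_iff]
      constructor
      · have hc2 : Continuous (fun β : ℝ =>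
            c * (d * β * Real.cos (β * L) + ν * Real.sin (β * L))) := by fun_prop
        have := (hc2.tendsto βb).mono_left (nhdsWithin_le_nhds (s := Set.Iio βb))
        simpa [hβbzero] using this
      · filter_upwards [Ioo_mem_nhdsLT_of_mem (Set.mem_Ioc.mpr ⟨h1, le_rfl⟩)] with β hβ
        exact mul_pos hc (hgpos β ⟨lt_trans hhalfpos hβ.1, hβ.2⟩)
    exact tendsto_inv_nhdsGT_zero.comp hden
  · intro β hβ
    have hβpos : 0 < β := lt_trans hhalfpos hβ.1
    have hcos := hcosneg β hβ.1 hβ.2.le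
    have hN : 0 < -μ * d * β * Real.cos (β * L) := by nlinarith [mul_pos (mul_pos (mul_pos hμ hd) hβpos) (neg_pos.mpr hcos)]
    have hG : 0 < d * β * Real.cos (β * L) + ν * Real.sin (β * L) :=
      hgpos β ⟨hβpos, hβ.2⟩
    set N := -μ * d * β * Real.cos (β * L) with hNdef
    set G := d * β * Real.cos (β * L) + ν * Real.sin (β * L) with hGdef
    have heq : (fun c => A c β) = fun c => (N / G) / c := by
      funext c
      rw [hA, mul_comm c, ← div_div]
    have hKpos : 0 < N / G := div_pos hN hG
    refine ⟨?_, ?_, ?_⟩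
    · intro c1 hc1 c2 hc2 hlt
      rw [heq]
      exact div_lt_div_of_pos_left hKpos (Set.mem_Ioi.mp hc1) hlt
    · rw [heq]
      simp only [div_eq_mul_inv]
      exact Filter.Tendsto.const_mul_atTop hKpos tendsto_inv_nhdsGT_zero
    · rw [heq]
      exact Filter.Tendsto.div_atTop tendsto_const_nhds tendsto_id
end
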